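/- Let μ > 0. For t ∈ ℝ and 0 < r < μ define u₁(t,r) = 2μ·√(μ/r-1)·cosh(t/(2μ)) and u₂(t,r) = 2μ·√(μ/r-1)·sinh(t/(2μ)), and let w : (0,μ) → ℝ be differentiable with w'(r) = √((r+μ)(r²+μ²)/r³) for all 0 < r < μ. Then for all t ∈ ℝ and 0 < r < μ: (i) -((∂u₁/∂t)(t,r))² + ((∂u₂/∂t)(t,r))² = -(1 - μ/r); (ii) -((∂u₁/∂r)(t,r))² + ((∂u₂/∂r)(t,r))² + (w'(r))² = 1/(1 - μ/r); (iii) -(∂u₁/∂t)(t,r)·(∂u₁/∂r)(t,r) + (∂u₂/∂t)(t,r)·(∂u₂/∂r)(t,r) = 0. Here ∂/∂t and ∂/∂r denote derivatives of the one-variable slices. -/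

import Mathlib

/-- Fronsdal embedding coordinate `u₁` on the black-hole region. -/
noncomputable def u1F (μ t r : ℝ) : ℝ :=
  2 * μ * Real.sqrt (μ / r - 1) * Real.cosh (t / (2 * μ))

/-- Fronsdal embedding coordinate `u₂` on the black-hole region. -/
noncomputable def u2F (μ t r : ℝ) : ℝ :=
  2 * μ * Real.sqrt (μ / r - 1) * Real.sinh (t / (2 * μ))

/-- The Fronsdal isometry identities on the black-hole region `0 < r < μ` of the
Hilbert-Droste solution. -/
theorem fronsdal_isometry_identities_black_hole (μ : ℝ) (hμ : 0 < μ)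
    (w : ℝ → ℝ)
    (hw : ∀ r : ℝ, 0 < r → r < μ →
      HasDerivAt w (Real.sqrt ((r + μ) * (r ^ 2 + μ ^ 2) / r ^ 3)) r)
    (t r : ℝ) (hr0 : 0 < r) (hrμ : r < μ) :
    (-(deriv (fun t' => u1F μ t' r) t) ^ 2 + (deriv (fun t' => u2F μ t' r) t) ^ 2
      = -(1 - μ / r)) ∧
    (-(deriv (fun r' => u1F μ t r') r) ^ 2 + (deriv (fun r' => u2F μ t r') r) ^ 2
      + (deriv w r) ^ 2 = 1 / (1 - μ / r)) ∧
    (-(deriv (fun t' => u1F μ t' r) t * deriv (fun r' => u1F μ t r') r)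
      + deriv (fun t' => u2F μ t' r) t * deriv (fun r' => u2F μ t r') r = 0) := by
  have hrne : r ≠ 0 := hr0.ne'
  have hμne : μ ≠ 0 := hμ.ne'
  have h2μ : (2 * μ) ≠ 0 := by positivity
  set s := Real.sqrt (μ / r - 1) with hs_def
  have hXpos : 0 < μ / r - 1 := by
    have : 1 < μ / r := (one_lt_div hr0).mpr hrμ
    linarith
  have hs2 : s ^ 2 = μ / r - 1 := Real.sq_sqrt hXpos.le
  have hspos : 0 < s := Real.sqrt_pos.mpr hXpos
  have hsne : s ≠ 0 := hspos.ne'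
  set c := Real.cosh (t / (2 * μ)) with hc_def
  set h := Real.sinh (t / (2 * μ)) with hh_def
  have hch : c ^ 2 - h ^ 2 = 1 := Real.cosh_sq_sub_sinh_sq _
  -- t-derivatives
  have hid : HasDerivAt (fun t' : ℝ => t' / (2 * μ)) (1 / (2 * μ)) t := by
    simpa using (hasDerivAt_id t).div_const (2 * μ)
  have hd1t : HasDerivAt (fun t' => u1F μ t' r) (2 * μ * s * (h * (1 / (2 * μ)))) t := by
    exact ((Real.hasDerivAt_cosh _).comp t hid).const_mul (2 * μ * s)
  have hd2t : HasDerivAt (fun t' => u2F μ t' r) (2 * μ * s * (c * (1 / (2 * μ)))) t := by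
    exact ((Real.hasDerivAt_sinh _).comp t hid).const_mul (2 * μ * s)
  -- r-derivatives
  have hinv : HasDerivAt (fun r' : ℝ => μ / r' - 1) (μ * -(r ^ 2)⁻¹) r := by
    have := ((hasDerivAt_inv hrne).const_mul μ).sub_const 1
    simpa [div_eq_mul_inv] using this
  have hsqrt : HasDerivAt (fun r' => Real.sqrt (μ / r' - 1))
      (1 / (2 * s) * (μ * -(r ^ 2)⁻¹)) r :=
    (Real.hasDerivAt_sqrt hXpos.ne').comp r hinv
  have hd1r : HasDerivAt (fun r' => u1F μ t r')
      (2 * μ * (1 / (2 * s) * (μ * -(r ^ 2)⁻¹)) * c) r := by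
    exact ((hsqrt.const_mul (2 * μ)).mul_const c)
  have hd2r : HasDerivAt (fun r' => u2F μ t r')
      (2 * μ * (1 / (2 * s) * (μ * -(r ^ 2)⁻¹)) * h) r := by
    exact ((hsqrt.const_mul (2 * μ)).mul_const h)
  have e1t : deriv (fun t' => u1F μ t' r) t = 2 * μ * s * (h * (1 / (2 * μ))) := hd1t.deriv
  have e2t : deriv (fun t' => u2F μ t' r) t = 2 * μ * s * (c * (1 / (2 * μ))) := hd2t.deriv
  have e1r : deriv (fun r' => u1F μ t r') r = 2 * μ * (1 / (2 * s) * (μ * -(r ^ 2)⁻¹)) * c :=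
    hd1r.deriv
  have e2r : deriv (fun r' => u2F μ t r') r = 2 * μ * (1 / (2 * s) * (μ * -(r ^ 2)⁻¹)) * h :=
    hd2r.deriv
  have ew : deriv w r = Real.sqrt ((r + μ) * (r ^ 2 + μ ^ 2) / r ^ 3) :=
    (hw r hr0 hrμ).deriv
  have hwsq : (deriv w r) ^ 2 = (r + μ) * (r ^ 2 + μ ^ 2) / r ^ 3 := by
    rw [ew]
    exact Real.sq_sqrt (by positivity)
  have hrμne : r - μ ≠ 0 := sub_ne_zero.mpr hrμ.ne
  have e1t' : deriv (fun t' => u1F μ t' r) t = s * h := by rw [e1t]; field_simp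
  have e2t' : deriv (fun t' => u2F μ t' r) t = s * c := by rw [e2t]; field_simp
  have e1r' : deriv (fun r' => u1F μ t r') r = -(μ ^ 2 * c) / (s * r ^ 2) := by
    rw [e1r]; field_simp
  have e2r' : deriv (fun r' => u2F μ t r') r = -(μ ^ 2 * h) / (s * r ^ 2) := by
    rw [e2r]; field_simp
  have hμr : (0:ℝ) < μ - r := by linarith
  have h1ne : (1 - μ / r) ≠ 0 := by
    have : 1 - μ / r < 0 := by linarith [hXpos]
    exact this.ne
  have hsq' : s ^ 2 * r = μ - r := by
    rw [hs2]; field_simp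
  refine ⟨?_, ?_, ?_⟩
  · rw [e1t', e2t']
    linear_combination (c ^ 2 - h ^ 2) * hs2 + (μ / r - 1) * hch
  · rw [e1r', e2r', hwsq]
    field_simp
    linear_combination -μ ^ 4 * (r - μ) * hch - μ ^ 4 * hsq'
  · rw [e1t', e2t', e1r', e2r']
    ring
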